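/- Let n, p, k be positive integers with p < n. Let K̃ be a real n×p matrix of rank p (so K̃ᵀK̃ is invertible), and set K̃⁺ := (K̃ᵀK̃)⁻¹·K̃ᵀ. Let Ñ be a real n×n matrix, C an invertible real n×n matrix, and δ a real n×k matrix, satisfying: (1) K̃·K̃⁺ = Ñ; (2) Ñ is symmetric and idempotent; (3) Ñ·C = C·Ñ = Ñ·C·Ñ; (4) Ñ·δ = δ. Then the matrix C⁻¹·Ñ satisfies the four Penrose conditions for Ñ·C — that is, (Ñ·C)·(C⁻¹·Ñ)·(Ñ·C) = Ñ·C, (C⁻¹·Ñ)·(Ñ·C)·(C⁻¹·Ñ) = C⁻¹·Ñ, and both (Ñ·C)·(C⁻¹·Ñ) and (C⁻¹·Ñ)·(Ñ·C) are symmetric — so that C⁻¹·Ñ is the Moore–Penrose pseudoinverse of Ñ·C. Moreover (C⁻¹·Ñ)·δ = C⁻¹·δ; in particular the Moore–Penrose pseudoinverse of Ñ·C applied to δ equals C⁻¹·δ. -/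
import Mathlib


open Matrix

/-- Under conditions (1)–(4), the matrix `C⁻¹ Ñ` satisfies the four Penrose
conditions for `Ñ C` (so it is the Moore–Penrose pseudoinverse of `Ñ C`), and moreover
`(C⁻¹ Ñ) δ = C⁻¹ δ`. -/
theorem stmt8 (n p k : ℕ) (hn : 0 < n) (hp : 0 < p) (hk : 0 < k) (hpn : p < n)
    (Kt : Matrix (Fin n) (Fin p) ℝ) (hKrank : Kt.rank = p)
    (Kplus : Matrix (Fin p) (Fin n) ℝ) (hKplus : Kplus = (Ktᵀ * Kt)⁻¹ * Ktᵀ)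
    (Nt : Matrix (Fin n) (Fin n) ℝ)
    (C : Matrix (Fin n) (Fin n) ℝ) (hC : IsUnit C.det)
    (δ : Matrix (Fin n) (Fin k) ℝ)
    (h1 : Kt * Kplus = Nt)
    (h2symm : Nt.IsSymm) (h2idem : Nt * Nt = Nt)
    (h3a : Nt * C = C * Nt) (h3b : C * Nt = Nt * C * Nt)
    (h4 : Nt * δ = δ) :
    ((Nt * C) * (C⁻¹ * Nt) * (Nt * C) = Nt * C ∧
      (C⁻¹ * Nt) * (Nt * C) * (C⁻¹ * Nt) = C⁻¹ * Nt ∧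
      ((Nt * C) * (C⁻¹ * Nt)).IsSymm ∧
      ((C⁻¹ * Nt) * (Nt * C)).IsSymm) ∧
    (C⁻¹ * Nt) * δ = C⁻¹ * δ := by
  have hCC : C * C⁻¹ = 1 := Matrix.mul_nonsing_inv C hC
  have hCC' : C⁻¹ * C = 1 := Matrix.nonsing_inv_mul C hC
  have key : (Nt * C) * (C⁻¹ * Nt) = Nt := by
    calc (Nt * C) * (C⁻¹ * Nt) = Nt * (C * C⁻¹) * Nt := by noncomm_ring
    _ = Nt := by rw [hCC, Matrix.mul_one, h2idem]
  have key2 : (C⁻¹ * Nt) * (Nt * C) = Nt := by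
    calc (C⁻¹ * Nt) * (Nt * C) = C⁻¹ * ((Nt * Nt) * C) := by noncomm_ring
    _ = C⁻¹ * (C * Nt) := by rw [h2idem, h3a]
    _ = Nt := by rw [← Matrix.mul_assoc, hCC', Matrix.one_mul]
  have hcomm : Nt * C⁻¹ = C⁻¹ * Nt := by
    calc Nt * C⁻¹ = (C⁻¹ * C) * Nt * C⁻¹ := by rw [hCC', Matrix.one_mul]
    _ = C⁻¹ * ((Nt * C) * C⁻¹) := by rw [Matrix.mul_assoc C⁻¹ C Nt, ← h3a]; noncomm_ring
    _ = C⁻¹ * Nt := by rw [Matrix.mul_assoc, hCC, Matrix.mul_one]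
  refine ⟨⟨?_, ?_, ?_, ?_⟩, ?_⟩
  · rw [key, ← Matrix.mul_assoc, h2idem]
  · rw [key2, ← Matrix.mul_assoc, hcomm, Matrix.mul_assoc, h2idem]
  · rw [key]; exact h2symm
  · rw [key2]; exact h2symm
  · rw [Matrix.mul_assoc, h4]
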